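/- For λ > 0, τ > 0 and r ∈ ℝ, ∫_{-∞}^{∞} (λ/2)·exp(-λ|x|) · exp(-(x - r)²/(2τ)) dx = (1/2)·exp(-r²/(2τ)) · [ λ·√(πτ/2)·erfcx( -(r - λτ)/√(2τ) ) + λ·√(πτ/2)·erfcx( (r + λτ)/√(2τ) ) ]. -/

import Mathlib

/-!
On each half-line, completing the square turns `exp (-λx) · exp (-(x - r)² / (2τ))` into the
constant `exp (((r - λτ)² - r²) / (2τ))` times a Gaussian centred at `r - λτ`, whose integral over
`(0, ∞)` is an `erfc` value; the factor `exp ((r - λτ)² / (2τ))` is exactly the one that turns it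
into `erfcx`. The reflection `x ↦ -x` maps the negative half-line to the positive one with `r`
replaced by `-r`.
-/

/-- The complementary error function `erfc t = (2/√π) ∫_t^∞ exp(-s²) ds`. -/
noncomputable def erfc (t : ℝ) : ℝ :=
  (2 / Real.sqrt Real.pi) * ∫ s in Set.Ioi t, Real.exp (-s ^ 2)

/-- The scaled complementary error function `erfcx t = exp(t²)·erfc t`. -/
noncomputable def erfcx (t : ℝ) : ℝ := Real.exp (t ^ 2) * erfc t

open MeasureTheory Set Real

theorem integral_Ioi_comp_sub_right {E : Type*} [NormedAddCommGroup E] [NormedSpace ℝ E]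
    (g : ℝ → E) (a m : ℝ) : ∫ x in Ioi a, g (x - m) = ∫ x in Ioi (a - m), g x := by
  have := (measurePreserving_sub_right volume m).setIntegral_preimage_emb
    (measurableEmbedding_subRight m) g (Ioi (a - m))
  rwa [preimage_sub_const_Ioi, sub_add_cancel] at this

theorem integral_eq_integral_Ioi_add_integral_Ioi_comp_neg {E : Type*} [NormedAddCommGroup E]
    [NormedSpace ℝ E] {f : ℝ → E} (hpos : IntegrableOn f (Ioi 0))
    (hneg : IntegrableOn (fun x ↦ f (-x)) (Ioi 0)) :
    ∫ x, f x = (∫ x in Ioi 0, f x) + ∫ x in Ioi 0, f (-x) := by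
  have hIic : IntegrableOn f (Iic 0) := by
    rw [← (Measure.measurePreserving_neg volume).integrableOn_comp_preimage
      (Homeomorph.neg ℝ).measurableEmbedding, neg_preimage, neg_Iic, neg_zero,
      integrableOn_Ici_iff_integrableOn_Ioi]
    exact hneg
  rw [← intervalIntegral.integral_Iic_add_Ioi hIic hpos, add_comm, integral_comp_neg_Ioi, neg_zero]

theorem integral_Ioi_exp_neg_sq (t : ℝ) : ∫ s in Ioi t, exp (-s ^ 2) = √π / 2 * erfc t := by
  rw [erfc]
  field_simp

theorem integral_Ioi_exp_neg_sub_sq_div {τ : ℝ} (hτ : 0 < τ) (m : ℝ) :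
    ∫ x in Ioi 0, exp (-(x - m) ^ 2 / (2 * τ)) = √(π * τ / 2) * erfc (-m / √(2 * τ)) := by
  have hc : 0 < √(2 * τ) := by positivity
  have hscale : ∀ y, exp (-y ^ 2 / (2 * τ)) = exp (-((√(2 * τ))⁻¹ * y) ^ 2) := by
    intro y
    rw [mul_pow, inv_pow, sq_sqrt (by positivity)]
    ring_nf
  have hsqrt : √(π * τ / 2) = √(2 * τ) * (√π / 2) := by
    rw [show π * τ / 2 = 2 * τ * π / 2 ^ 2 by ring, sqrt_div' _ (by positivity),
      sqrt_mul (by positivity), sqrt_sq zero_le_two]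
    ring
  rw [integral_Ioi_comp_sub_right (fun y ↦ exp (-y ^ 2 / (2 * τ))), zero_sub]
  simp_rw [hscale]
  rw [integral_comp_mul_left_Ioi (fun s ↦ exp (-s ^ 2)) _ (inv_pos.mpr hc),
    integral_Ioi_exp_neg_sq, smul_eq_mul, inv_inv, hsqrt, inv_mul_eq_div]
  ring

theorem integrable_exp_neg_sub_sq_div {τ : ℝ} (hτ : 0 < τ) (m : ℝ) :
    Integrable fun x ↦ exp (-(x - m) ^ 2 / (2 * τ)) := by
  have := (integrable_exp_neg_mul_sq (inv_pos.mpr (mul_pos two_pos hτ))).comp_sub_right m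
  refine this.congr (.of_forall fun x ↦ ?_)
  simp only
  ring_nf

theorem exp_neg_mul_mul_exp_neg_sub_sq_div {τ : ℝ} (hτ : τ ≠ 0) (lam r x : ℝ) :
    exp (-(lam * x)) * exp (-(x - r) ^ 2 / (2 * τ)) =
      exp (-r ^ 2 / (2 * τ)) * exp ((r - lam * τ) ^ 2 / (2 * τ)) *
        exp (-(x - (r - lam * τ)) ^ 2 / (2 * τ)) := by
  rw [← exp_add, ← exp_add, ← exp_add]
  congr 1
  field_simp
  ring

theorem integrable_exp_neg_mul_mul_exp_neg_sub_sq_div {τ : ℝ} (hτ : 0 < τ) (lam r : ℝ) :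
    Integrable fun x ↦ exp (-(lam * x)) * exp (-(x - r) ^ 2 / (2 * τ)) := by
  simp_rw [exp_neg_mul_mul_exp_neg_sub_sq_div hτ.ne']
  exact (integrable_exp_neg_sub_sq_div hτ _).const_mul _

theorem integral_Ioi_exp_neg_mul_mul_exp_neg_sub_sq_div {τ : ℝ} (hτ : 0 < τ) (lam r : ℝ) :
    ∫ x in Ioi 0, exp (-(lam * x)) * exp (-(x - r) ^ 2 / (2 * τ)) =
      exp (-r ^ 2 / (2 * τ)) * √(π * τ / 2) * erfcx (-(r - lam * τ) / √(2 * τ)) := by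
  have hsq : (-(r - lam * τ) / √(2 * τ)) ^ 2 = (r - lam * τ) ^ 2 / (2 * τ) := by
    rw [div_pow, neg_sq, sq_sqrt (by positivity)]
  simp_rw [exp_neg_mul_mul_exp_neg_sub_sq_div hτ.ne']
  rw [integral_const_mul, integral_Ioi_exp_neg_sub_sq_div hτ, erfcx, hsq]
  ring

theorem laplace_gaussian_integral_general
    (lam tau r : ℝ) (htau : 0 < tau) :
    ∫ x : ℝ, (lam / 2) * Real.exp (-lam * |x|) * Real.exp (-(x - r) ^ 2 / (2 * tau)) =
      (1 / 2) * Real.exp (-r ^ 2 / (2 * tau)) *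
        (lam * Real.sqrt (Real.pi * tau / 2) *
            erfcx (-(r - lam * tau) / Real.sqrt (2 * tau)) +
          lam * Real.sqrt (Real.pi * tau / 2) *
            erfcx ((r + lam * tau) / Real.sqrt (2 * tau))) := by
  let g : ℝ → ℝ → ℝ := fun s x ↦ lam / 2 * (exp (-(lam * x)) * exp (-(x - s) ^ 2 / (2 * tau)))
  have hg : ∀ s, Integrable (g s) := fun s ↦
    (integrable_exp_neg_mul_mul_exp_neg_sub_sq_div htau lam s).const_mul _
  have hpos : EqOn (fun x ↦ lam / 2 * exp (-lam * |x|) * exp (-(x - r) ^ 2 / (2 * tau)))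
      (g r) (Ioi 0) := fun x hx ↦ by
    simp only [g, abs_of_pos (mem_Ioi.mp hx), neg_mul, mul_assoc]
  have hneg : EqOn (fun x ↦ lam / 2 * exp (-lam * |-x|) * exp (-(-x - r) ^ 2 / (2 * tau)))
      (g (-r)) (Ioi 0) := fun x hx ↦ by
    simp only [g, abs_neg, abs_of_pos (mem_Ioi.mp hx), neg_mul, mul_assoc, ← neg_add', neg_sq,
      sub_neg_eq_add]
  rw [integral_eq_integral_Ioi_add_integral_Ioi_comp_neg
      ((hg r).integrableOn.congr_fun hpos.symm measurableSet_Ioi)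
      ((hg (-r)).integrableOn.congr_fun hneg.symm measurableSet_Ioi),
    setIntegral_congr_fun measurableSet_Ioi hpos, setIntegral_congr_fun measurableSet_Ioi hneg]
  simp only [g, integral_const_mul, integral_Ioi_exp_neg_mul_mul_exp_neg_sub_sq_div htau, neg_sq,
    show -(-r - lam * tau) = r + lam * tau by ring]
  ring

/-- Laplace prior convolved with an unnormalized Gaussian kernel. -/
theorem laplace_gaussian_integral
    (lam tau r : ℝ) (hlam : 0 < lam) (htau : 0 < tau) :
    ∫ x : ℝ, (lam / 2) * Real.exp (-lam * |x|) * Real.exp (-(x - r) ^ 2 / (2 * tau)) =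
      (1 / 2) * Real.exp (-r ^ 2 / (2 * tau)) *
        (lam * Real.sqrt (Real.pi * tau / 2) *
            erfcx (-(r - lam * tau) / Real.sqrt (2 * tau)) +
          lam * Real.sqrt (Real.pi * tau / 2) *
            erfcx ((r + lam * tau) / Real.sqrt (2 * tau))) :=
  laplace_gaussian_integral_general lam tau r htau
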